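/- Let F be a Fractran program and 𝒜_F the associated Fractran-type canonical collection. Every Fractran trajectory is reached: for any positive integer n, setting L = ⌈log_b(n+1)⌉ + 1, the trajectory in the canonical system of 𝒜_F starting from N = n · b^{L(L+1)/2} = n · ∏_{i=0}^{L-1} b_i attains the value n at step L, i.e. n_L = n where n_0 = N and n_{j+1} = f_j(n_j), and no trajectory value n_j with j < L hits the exceptional value b_j − 1. -/

import Mathlib

/-- One Fractran iteration: on input `n ≥ 1`, multiply by the first fraction in the
program giving an integer; return `0` if there is no such fraction (the program halts)
or if `n = 0`. -/
def fractranStep (F : List ℚ) (n : ℕ) : ℕ :=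
  if n = 0 then 0
  else
    match F.find? (fun q => ((n : ℚ) * q).den == 1) with
    | some q => ((n : ℚ) * q).num.toNat
    | none => 0

/-- The Fractran program `F` halts on input `n`. -/
def FractranHalts (F : List ℚ) (n : ℕ) : Prop :=
  ∃ k : ℕ, (fractranStep F)^[k] n = 0

/-- The base `b = 1 + ⌈max_k F_k⌉` of the Fractran-type canonical collection `𝒜_F`. -/
def bBase (F : List ℚ) : ℤ := 1 + (F.map fun q => ⌈q⌉).foldr max 0

/-- The bases of `𝒜_F`: `b_i = b^(i+1)`. -/
def bF (F : List ℚ) (i : ℕ) : ℤ := bBase F ^ (i + 1)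

/-- The digit maps of `𝒜_F` on `[0, b_i)`: `f_F` except at the exceptional value
`b_i - 1`, which is sent to `1`. -/
def digitF (F : List ℚ) (i : ℕ) (r : ℤ) : ℤ :=
  if r = bF F i - 1 then 1 else (fractranStep F r.toNat : ℤ)

/-- The residue sets of `𝒜_F`: `T_i = {r - b_i · f_i(r) : 0 ≤ r < b_i}`. -/
def TFr (F : List ℚ) (i : ℕ) : Set ℤ :=
  (fun r => r - bF F i * digitF F i r) '' Set.Ico 0 (bF F i)

/-- The canonical system maps of `𝒜_F`: `f_i(n) = (n - t_i(n)) / b_i`, where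
`t_i(n) = r - b_i · f_i(r)` with `r = n mod b_i ∈ [0, b_i)` is the unique element of
`T_i` congruent to `n` modulo `b_i`. -/
def fFr (F : List ℚ) (i : ℕ) (n : ℤ) : ℤ :=
  (n - Int.emod n (bF F i)) / bF F i + digitF F i (Int.emod n (bF F i))

/-- The trajectory of `n` in the canonical system of `𝒜_F`:
`n_0 = n`, `n_{i+1} = f_i(n_i)`. -/
def trajFr (F : List ℚ) (n : ℤ) : ℕ → ℤ
  | 0 => n
  | i + 1 => fFr F i (trajFr F n i)

/-! Since `b ≥ 2`, the residue `0` is never exceptional and `f_F(0) = 0`, so `f_i` divides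
every multiple of `b_i` exactly by `b_i`. Starting from `n · b_0 ⋯ b_{L-1}`, step `j` therefore
strips off the factor `b_j`; each value met before step `L` is still a multiple of `b_j`,
hence not congruent to `b_j - 1`. -/

open Finset

lemma one_lt_bBase {F : List ℚ} {q : ℚ} (hq : q ∈ F) (hq0 : 0 < q) : 1 < bBase F := by
  have hceil : 1 ≤ ⌈q⌉ := Int.one_le_ceil_iff.mpr hq0
  have hmax : ⌈q⌉ ≤ (F.map fun q => ⌈q⌉).foldr max 0 :=
    List.le_max_of_le' 0 (List.mem_map_of_mem hq) le_rfl
  unfold bBase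
  omega

lemma one_lt_bF {F : List ℚ} (hb : 1 < bBase F) (i : ℕ) : 1 < bF F i :=
  one_lt_pow₀ hb i.succ_ne_zero

lemma prod_bF_range (F : List ℚ) (L : ℕ) :
    ∏ i ∈ range L, bF F i = bBase F ^ (L * (L + 1) / 2) := by
  have htri : ∑ i ∈ range L, (i + 1) = L * (L + 1) / 2 := by
    have := sum_range_succ' (fun i => i) L
    rw [sum_range_id, Nat.add_sub_cancel, add_zero] at this
    rw [← this, Nat.mul_comm]
  rw [← htri, ← prod_pow_eq_pow_sum]
  rfl

lemma digitF_zero {F : List ℚ} {i : ℕ} (h : 1 < bF F i) : digitF F i 0 = 0 := by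
  rw [digitF, if_neg (by omega)]
  simp [fractranStep]

lemma fFr_mul_bF {F : List ℚ} {i : ℕ} (h : 1 < bF F i) (m : ℤ) : fFr F i (m * bF F i) = m := by
  have hmod : Int.emod (m * bF F i) (bF F i) = 0 := Int.mul_emod_left _ _
  rw [fFr, hmod, digitF_zero h, sub_zero, add_zero, Int.mul_ediv_cancel _ (by omega)]

lemma trajFr_mul_prod_bF {F : List ℚ} (hb : 1 < bBase F) (m : ℤ) {L j : ℕ} (hj : j ≤ L) :
    trajFr F (m * ∏ i ∈ range L, bF F i) j = m * ∏ i ∈ Ico j L, bF F i := by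
  induction j with
  | zero => rw [range_eq_Ico]; rfl
  | succ j ih =>
    rw [trajFr, ih (by omega), prod_eq_prod_Ico_succ_bot (by omega), mul_left_comm,
      mul_comm (bF F j), fFr_mul_bF (one_lt_bF hb j)]

theorem trajFr_reaches_fractran_general
    (F : List ℚ) (hne : F ≠ []) (hpos : ∀ q ∈ F, 0 < q)
    (n : ℕ)
    (L : ℕ) :
    trajFr F ((n : ℤ) * bBase F ^ (L * (L + 1) / 2)) L = (n : ℤ) ∧
    ∀ j < L, trajFr F ((n : ℤ) * bBase F ^ (L * (L + 1) / 2)) j ≠ bF F j - 1 := by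
  obtain ⟨q, hq⟩ := List.exists_mem_of_ne_nil F hne
  have hb : 1 < bBase F := one_lt_bBase hq (hpos q hq)
  rw [← prod_bF_range]
  refine ⟨by rw [trajFr_mul_prod_bF hb _ le_rfl, Ico_self, prod_empty, mul_one], ?_⟩
  intro j hj hexc
  rw [trajFr_mul_prod_bF hb _ hj.le, prod_eq_prod_Ico_succ_bot hj] at hexc
  have hdvd : bF F j ∣ bF F j - 1 := hexc ▸ dvd_mul_of_dvd_right (dvd_mul_right _ _) _
  have hle : bF F j ≤ 1 := Int.le_of_dvd one_pos (dvd_sub_self_left.mp hdvd)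
  exact absurd hle (one_lt_bF hb j).not_ge

/-- In the canonical system of `𝒜_F`, every Fractran trajectory is reached: for any
positive integer `n`, with `L = ⌈log_b (n+1)⌉ + 1`, the trajectory starting from
`N = n · b^(L(L+1)/2) = n · ∏_{i=0}^{L-1} b_i` attains the value `n` at step `L`,
and no earlier trajectory value hits the exceptional value `b_j - 1`. -/
theorem trajFr_reaches_fractran
    (F : List ℚ) (hne : F ≠ []) (hpos : ∀ q ∈ F, 0 < q)
    (n : ℕ) (hn : 0 < n)
    (L : ℕ) (hL : L = Nat.clog (bBase F).toNat (n + 1) + 1) :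
    trajFr F ((n : ℤ) * bBase F ^ (L * (L + 1) / 2)) L = (n : ℤ) ∧
    ∀ j < L, trajFr F ((n : ℤ) * bBase F ^ (L * (L + 1) / 2)) j ≠ bF F j - 1 :=
  trajFr_reaches_fractran_general F hne hpos n L
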